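/- Suppose k ≥ 1, v ≥ 1 and n ≥ v(k−1). Then the following identity of polynomials in x holds: Y_{n,β}^{(v)}(x;k,a,b) = ((n)_{v(k−1)}/(2^{v(k−1)}·a^{vb}))·ℬ_{n−v(k−1)}^{(v)}(x, β^b/a^b), where ℬ^{(v)} denotes the Apostol–Bernoulli polynomials of order v. -/

import Mathlib

open Polynomial

/-- The exponential generating series `e^{xt} = ∑_{n≥0} xⁿ tⁿ/n!` as a formal power series
in `t` with coefficients in `ℂ[x]`. -/
noncomputable def expX : PowerSeries (Polynomial ℂ) :=
  PowerSeries.mk fun n => (n.factorial : ℂ)⁻¹ • (Polynomial.X : Polynomial ℂ) ^ n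

/-- The exponential generating series `∑_{n≥0} Y_n tⁿ/n!` of a family of polynomials. -/
noncomputable def egf (Y : ℕ → Polynomial ℂ) : PowerSeries (Polynomial ℂ) :=
  PowerSeries.mk fun n => (n.factorial : ℂ)⁻¹ • Y n

/-- The defining identity for the unified Apostol-type polynomials with general constants:
`(B·e^t − A)^v · ∑_{n≥0} Y_n tⁿ/n! = (2^{1−k} t^k)^v · e^{xt}` as formal power series in `t`
over `ℂ[x]`. -/
def ApostolFamilyC (k v : ℕ) (B A : ℂ) (Y : ℕ → Polynomial ℂ) : Prop :=
  (PowerSeries.C (Polynomial.C B) * PowerSeries.exp (Polynomial ℂ)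
      - PowerSeries.C (Polynomial.C A)) ^ v * egf Y
    = (PowerSeries.C (Polynomial.C ((2 : ℂ) ^ ((1 : ℤ) - (k : ℤ)))) *
        PowerSeries.X ^ k) ^ v * expX

/-- `Y` is the family of unified Apostol-type polynomials `Y_{n,β}^{(v)}(x;k,a,b)`:
here `β^b = exp(b·Log β)` is the principal complex power and `a^b` the real power. -/
def ApostolFamily (k v : ℕ) (a b : ℝ) (β : ℂ) (Y : ℕ → Polynomial ℂ) : Prop :=
  ApostolFamilyC k v (β ^ (b : ℂ)) (((a ^ b : ℝ) : ℂ)) Y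

/-- The defining identity for the Apostol–Bernoulli polynomials of order `v`:
`(λ·e^t − 1)^v · ∑_{n≥0} ℬ_n^{(v)}(x,λ) tⁿ/n! = t^v·e^{xt}`. -/
def ApostolBernoulliFamily (v : ℕ) (lam : ℂ) (B : ℕ → Polynomial ℂ) : Prop :=
  (PowerSeries.C (Polynomial.C lam) * PowerSeries.exp (Polynomial ℂ) - 1) ^ v *
      egf B
    = PowerSeries.X ^ v * expX

/-! Writing `λ = β^b / a^b`, one has `β^b e^t − a^b = a^b (λ e^t − 1)` and `(t^k)^v = t^{v(k−1)} t^v`,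
so multiplying the defining identity of `ℬ^{(v)}` by `2^{-v(k−1)} t^{v(k−1)}` gives that of `Y` up to
the factor `a^{vb}`. Cancelling `(λ e^t − 1)^v`, which is nonzero in the domain `ℂ[x]⟦t⟧`, and
comparing coefficients of `tⁿ` yields the identity, with `n! / (n − v(k−1))! = (n)_{v(k−1)}`. -/

theorem PowerSeries.C_mul_exp_sub_one_ne_zero {R : Type*} [CommRing R] [Algebra ℚ R]
    [Nontrivial R] (r : R) : PowerSeries.C r * PowerSeries.exp R - 1 ≠ 0 := by
  intro h
  have h₀ : r - 1 = 0 := by simpa using congrArg (PowerSeries.coeff 0) h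
  have h₁ : r = 0 := by simpa [PowerSeries.coeff_exp] using congrArg (PowerSeries.coeff 1) h
  simp [h₁] at h₀

theorem zpow_one_sub_pow {G : Type*} [GroupWithZero G] (x : G) {k : ℕ} (hk : 1 ≤ k) (v : ℕ) :
    (x ^ ((1 : ℤ) - k)) ^ v = (x ^ (v * (k - 1)))⁻¹ := by
  rw [← zpow_natCast, ← zpow_mul, ← zpow_natCast, ← zpow_neg]
  congr 1
  push_cast [hk]
  ring

theorem coeff_egf (Y : ℕ → ℂ[X]) (n : ℕ) :
    PowerSeries.coeff n (egf Y) = (n.factorial : ℂ)⁻¹ • Y n :=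
  PowerSeries.coeff_mk _ _

theorem coeff_X_pow_mul_egf (Y : ℕ → ℂ[X]) {m n : ℕ} (h : m ≤ n) :
    PowerSeries.coeff n (PowerSeries.X ^ m * egf Y) = ((n - m).factorial : ℂ)⁻¹ • Y (n - m) := by
  rw [PowerSeries.coeff_X_pow_mul', if_pos h, coeff_egf]

theorem PowerSeries.C_mul_exp_sub_C {R : Type*} [CommRing R] [Algebra ℚ R] (μ A lam : R)
    (h : A * lam = μ) :
    PowerSeries.C μ * PowerSeries.exp R - PowerSeries.C A
      = PowerSeries.C A * (PowerSeries.C lam * PowerSeries.exp R - 1) := by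
  rw [mul_sub, mul_one, ← mul_assoc, ← map_mul, h]

theorem ApostolFamilyC.C_pow_mul_egf {k v : ℕ} {μ A : ℂ} {Y B : ℕ → ℂ[X]} (hk : 1 ≤ k)
    (hA : A ≠ 0) (hY : ApostolFamilyC k v μ A Y) (hB : ApostolBernoulliFamily v (μ / A) B) :
    PowerSeries.C (C (A ^ v)) * egf Y = PowerSeries.C (C ((2 ^ (v * (k - 1)))⁻¹)) *
      (PowerSeries.X ^ (v * (k - 1)) * egf B) := by
  have hX : ((PowerSeries.X : PowerSeries ℂ[X]) ^ k) ^ v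
      = PowerSeries.X ^ (v * (k - 1)) * PowerSeries.X ^ v := by
    rw [← pow_mul, ← pow_add]
    congr 1
    rw [mul_comm, ← Nat.mul_add_one, Nat.sub_add_cancel hk]
  rw [ApostolFamilyC, PowerSeries.C_mul_exp_sub_C _ _ (C (μ / A)) (by rw [← C_mul, mul_div_cancel₀ _ hA]),
    mul_pow, mul_pow, hX] at hY
  rw [ApostolBernoulliFamily] at hB
  rw [← zpow_one_sub_pow _ hk, map_pow, map_pow, map_pow, map_pow]
  refine mul_left_cancel₀ (pow_ne_zero v (PowerSeries.C_mul_exp_sub_one_ne_zero (C (μ / A)))) ?_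
  linear_combination hY - PowerSeries.C (C ((2 : ℂ) ^ ((1 : ℤ) - k))) ^ v *
    PowerSeries.X ^ (v * (k - 1)) * hB

theorem ApostolFamilyC.eq_C_mul {k v : ℕ} {μ A : ℂ} {Y B : ℕ → ℂ[X]} (hk : 1 ≤ k)
    (hA : A ≠ 0) (hY : ApostolFamilyC k v μ A Y) (hB : ApostolBernoulliFamily v (μ / A) B)
    {n : ℕ} (hn : v * (k - 1) ≤ n) :
    Y n = C ((n.descFactorial (v * (k - 1)) : ℂ) / ((2 : ℂ) ^ (v * (k - 1)) * A ^ v)) *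
      B (n - v * (k - 1)) := by
  have h := congrArg (PowerSeries.coeff n) (hY.C_pow_mul_egf hk hA hB)
  rw [PowerSeries.coeff_C_mul, PowerSeries.coeff_C_mul, coeff_X_pow_mul_egf _ hn, coeff_egf,
    smul_eq_C_mul, smul_eq_C_mul, ← mul_assoc, ← mul_assoc, ← C_mul, ← C_mul] at h
  have hc : A ^ v * (n.factorial : ℂ)⁻¹ ≠ 0 :=
    mul_ne_zero (pow_ne_zero v hA) (inv_ne_zero (Nat.cast_ne_zero.mpr n.factorial_ne_zero))
  have hd : (n.descFactorial (v * (k - 1)) : ℂ) ≠ 0 := by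
    exact_mod_cast Nat.descFactorial_eq_zero_iff_lt.not.mpr hn.not_gt
  refine mul_left_cancel₀ (C_ne_zero.mpr hc) ?_
  rw [h, ← mul_assoc, ← C_mul]
  congr 2
  rw [← Nat.factorial_mul_descFactorial hn]
  push_cast
  field_simp

theorem apostol_eq_apostolBernoulli_general (k v : ℕ) (a b : ℝ) (β : ℂ)
    (ha : 0 < a) (hk : 1 ≤ k)
    (Y B : ℕ → Polynomial ℂ)
    (hY : ApostolFamily k v a b β Y)
    (hB : ApostolBernoulliFamily v (β ^ (b : ℂ) / ((a ^ b : ℝ) : ℂ)) B)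
    (n : ℕ) (hn : v * (k - 1) ≤ n) :
    Y n = Polynomial.C ((n.descFactorial (v * (k - 1)) : ℂ) /
        ((2 : ℂ) ^ (v * (k - 1)) * ((a ^ b : ℝ) : ℂ) ^ v)) * B (n - v * (k - 1)) :=
  ApostolFamilyC.eq_C_mul hk (Complex.ofReal_ne_zero.mpr (Real.rpow_pos_of_pos ha b).ne') hY hB hn

/-- For `k ≥ 1`, `v ≥ 1` and `n ≥ v(k−1)`:
`Y_{n,β}^{(v)}(x;k,a,b) = ((n)_{v(k−1)}/(2^{v(k−1)} a^{vb})) ℬ_{n−v(k−1)}^{(v)}(x, β^b/a^b)`. -/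
theorem apostol_eq_apostolBernoulli (k v : ℕ) (a b : ℝ) (β : ℂ)
    (ha : 0 < a) (hb : 0 < b) (hβ : β ≠ 0) (hk : 1 ≤ k) (hv : 1 ≤ v)
    (Y B : ℕ → Polynomial ℂ)
    (hY : ApostolFamily k v a b β Y)
    (hB : ApostolBernoulliFamily v (β ^ (b : ℂ) / ((a ^ b : ℝ) : ℂ)) B)
    (n : ℕ) (hn : v * (k - 1) ≤ n) :
    Y n = Polynomial.C ((n.descFactorial (v * (k - 1)) : ℂ) /
        ((2 : ℂ) ^ (v * (k - 1)) * ((a ^ b : ℝ) : ℂ) ^ v)) * B (n - v * (k - 1)) :=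
  apostol_eq_apostolBernoulli_general k v a b β ha hk Y B hY hB n hn
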